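/- Suppose 𝒴 = {0,1}. Let 𝒫*_{U,Mon} be the set of primitive distributions satisfying IV validity, IV monotonicity, P*(Y(0)=0) = 1, and P*(D(z,1)=1) = 1 for all z ∈ 𝒵. Fix an observed data distribution P with P(Z=z) > 0 for all z, and let z_max ∈ 𝒵 satisfy P(D=1 | Z=z_max) ≥ P(D=1 | Z=z) for all z. If 𝒫*_I(P; 𝒫*_{U,Mon}) is nonempty, then the identified set for the average counterfactual outcome equals the interval corresponding to the most lenient judge: Θ_I(P; 𝒫*_{U,Mon}) = [ P(Y=1, D=1 | Z=z_max), 1 − P(Y=0, D=1 | Z=z_max) ]. -/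

import Mathlib

/-!
Under universal release `Y(D(Z,1)) = Y(1)`, so `θ = P*(Y(1) = 1)`, while IV validity identifies
`P*(Y(1) = y, D(z,0) = 1)` with `P(Y = y, D = 1 | Z = z)`; hence `θ` lies in the interval of every
judge `z`. By monotonicity, a judge with the largest release rate almost surely releases every unit
that some judge releases, so `Y(1)` of the units it keeps is never observed. Setting it to `0`, or
to `1`, attains the two endpoints, and mixtures of these two primitive distributions fill the
interval.
-/

open Finset
open scoped Classical

namespace IVPol

/-- Sample space of model primitives `(Y(0), Y(1), D(·,·), Z)`:
a point records the two potential outcomes (elements of the finite outcome set `Y ⊆ ℝ`),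
the potential treatments `D(z, a) ∈ {0,1}` for every judge `z` and policy `a`,
and the instrument value `Z`. -/
abbrev Prim (Y : Finset ℝ) (K : ℕ) := Y × Y × (Fin K → Bool → Bool) × Fin K

/-- Sample space of the observed data `(Y, D, Z)`. -/
abbrev Obs (Y : Finset ℝ) (K : ℕ) := Y × Bool × Fin K

/-- A probability distribution on a finite type, given by its pmf. -/
structure Dist (α : Type*) [Fintype α] where
  p : α → ℝ
  nonneg : ∀ a, 0 ≤ p a
  sum_one : ∑ a, p a = 1

/-- Probability of an event. -/
noncomputable def Dist.pr {α : Type*} [Fintype α] (P : Dist α) (A : Set α) : ℝ :=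
  ∑ a, if a ∈ A then P.p a else 0

/-- Expectation of a real-valued random variable. -/
noncomputable def Dist.exp {α : Type*} [Fintype α] (P : Dist α) (f : α → ℝ) : ℝ :=
  ∑ a, P.p a * f a

variable {Y : Finset ℝ} {K : ℕ}

/-- Potential treatment `D(z, a)`. -/
def pd (ω : Prim Y K) (z : Fin K) (a : Bool) : Bool := ω.2.2.1 z a

/-- The instrument `Z`. -/
def pz (ω : Prim Y K) : Fin K := ω.2.2.2

/-- Observed treatment `D = D(Z, 0)`. -/
def obsD (ω : Prim Y K) : Bool := pd ω (pz ω) false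

/-- Observed outcome `Y = Y(D(Z, 0))`. -/
def obsY (ω : Prim Y K) : Y := if obsD ω then ω.2.1 else ω.1

/-- Counterfactual outcome `Y(D(Z, 1))`. -/
noncomputable def cfY (ω : Prim Y K) : ℝ :=
  if pd ω (pz ω) true then (ω.2.1 : ℝ) else (ω.1 : ℝ)

/-- IV validity: `(Y(0), Y(1), D(·,·))` is independent of `Z`. -/
def IVvalid (Ps : Dist (Prim Y K)) : Prop :=
  ∀ (a b : Y) (g : Fin K → Bool → Bool) (z : Fin K),
    Ps.pr {ω | ω.1 = a ∧ ω.2.1 = b ∧ ω.2.2.1 = g ∧ ω.2.2.2 = z}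
      = Ps.pr {ω | ω.1 = a ∧ ω.2.1 = b ∧ ω.2.2.1 = g} * Ps.pr {ω | ω.2.2.2 = z}

/-- `Ps` generates the observed data distribution `P`:
the law of `(Y(D(Z,0)), D(Z,0), Z)` under `Ps` is `P`. -/
def generates (Ps : Dist (Prim Y K)) (P : Dist (Obs Y K)) : Prop :=
  ∀ (y : Y) (d : Bool) (z : Fin K),
    P.p (y, d, z) = Ps.pr {ω | obsY ω = y ∧ obsD ω = d ∧ pz ω = z}

/-- Marginal pmf of judge `z`:
`π_z(y0, y1, d0, d1) = P*(Y(0)=y0, Y(1)=y1, D(z,0)=d0, D(z,1)=d1)`. -/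
noncomputable def marginal (Ps : Dist (Prim Y K)) (z : Fin K) (y0 y1 : Y) (d0 d1 : Bool) : ℝ :=
  Ps.pr {ω | ω.1 = y0 ∧ ω.2.1 = y1 ∧ pd ω z false = d0 ∧ pd ω z true = d1}

/-- Probability of `Z = z` under the observed distribution. -/
noncomputable def prZ (P : Dist (Obs Y K)) (z : Fin K) : ℝ := P.pr {o | o.2.2 = z}

/-- Conditional probability `P(Y = y, D = d | Z = z)` of the observed data. -/
noncomputable def obsCond (P : Dist (Obs Y K)) (y : Y) (d : Bool) (z : Fin K) : ℝ :=
  P.p (y, d, z) / prZ P z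

/-- Average counterfactual outcome `θ = E[Y(D(Z,1))]`. -/
noncomputable def theta (Ps : Dist (Prim Y K)) : ℝ := Ps.exp cfY

/-- The identified set for the average counterfactual outcome. -/
def ThetaI (P : Dist (Obs Y K)) (fam : Set (Dist (Prim Y K))) : Set ℝ :=
  {t | ∃ Ps ∈ fam, generates Ps P ∧ theta Ps = t}

/-- IV monotonicity: for every pair of judges, one is almost surely more lenient. -/
def ivMono (Ps : Dist (Prim Y K)) : Prop :=
  ∀ z z' : Fin K,
    Ps.pr {ω | pd ω z' false ≤ pd ω z false} = 1 ∨
    Ps.pr {ω | pd ω z false ≤ pd ω z' false} = 1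

/-- The binary outcome set `𝒴 = {0, 1}`. -/
noncomputable abbrev Y01 : Finset ℝ := {0, 1}

/-- The family `𝒫*_{U,Mon}`: IV validity, IV monotonicity, known outcome
`Y(0) = 0`, and universal release `D(z,1) = 1` for all judges `z`. -/
def famUMon (K : ℕ) : Set (Dist (Prim Y01 K)) :=
  {Ps | IVvalid Ps ∧ ivMono Ps ∧ Ps.pr {ω | (ω.1 : ℝ) = 0} = 1 ∧
        ∀ z : Fin K, Ps.pr {ω | pd ω z true = true} = 1}

namespace Dist

section

variable {α β : Type*} [Fintype α] [Fintype β] (P : Dist α)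

lemma pr_congr {S T : Set α} (h : ∀ a, P.p a ≠ 0 → (a ∈ S ↔ a ∈ T)) : P.pr S = P.pr T := by
  refine Finset.sum_congr rfl fun a _ => ?_
  by_cases hp : P.p a = 0
  · simp [hp]
  · simp [h a hp]

lemma pr_univ : P.pr Set.univ = 1 := by simp [Dist.pr, P.sum_one]

lemma pr_nonneg (S : Set α) : 0 ≤ P.pr S :=
  Finset.sum_nonneg fun a _ => ite_nonneg (P.nonneg a) le_rfl

lemma pr_mono {S T : Set α} (h : S ⊆ T) : P.pr S ≤ P.pr T :=
  Finset.sum_le_sum fun a _ => by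
    by_cases hS : a ∈ S
    · simp [hS, h hS]
    · simpa [hS] using ite_nonneg (P.nonneg a) le_rfl

lemma pr_inter_add_diff (S T : Set α) : P.pr (S ∩ T) + P.pr (S \ T) = P.pr S := by
  simp only [Dist.pr, ← Finset.sum_add_distrib]
  refine Finset.sum_congr rfl fun a _ => ?_
  by_cases hS : a ∈ S <;> by_cases hT : a ∈ T <;> simp [hS, hT]

lemma pr_compl (S : Set α) : P.pr Sᶜ = 1 - P.pr S := by
  have h := P.pr_inter_add_diff Set.univ S
  rw [Set.univ_inter, ← Set.compl_eq_univ_sdiff] at h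
  linarith [P.pr_univ]

lemma pr_eq_zero_iff (S : Set α) : P.pr S = 0 ↔ ∀ a, P.p a ≠ 0 → a ∉ S := by
  rw [Dist.pr, Finset.sum_eq_zero_iff_of_nonneg fun a _ => ite_nonneg (P.nonneg a) le_rfl]
  simp only [Finset.mem_univ, true_implies, ite_eq_right_iff]
  exact forall_congr' fun a => not_imp_not.symm

lemma pr_eq_one_iff (S : Set α) : P.pr S = 1 ↔ ∀ a, P.p a ≠ 0 → a ∈ S := by
  have h := P.pr_eq_zero_iff Sᶜ
  simp only [pr_compl, Set.mem_compl_iff, not_not, sub_eq_zero] at h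
  rw [eq_comm, h]

lemma ae_mem_of_ae_subset_of_pr_le {S T : Set α} (hST : ∀ a, P.p a ≠ 0 → a ∈ S → a ∈ T)
    (hTS : P.pr T ≤ P.pr S) : ∀ a, P.p a ≠ 0 → a ∈ T → a ∈ S := by
  have hS : P.pr (T ∩ S) = P.pr S :=
    P.pr_congr fun a ha => ⟨And.right, fun hs => ⟨hST a ha hs, hs⟩⟩
  have hdiff : P.pr (T \ S) = 0 := by
    have := P.pr_inter_add_diff T S
    linarith [P.pr_nonneg (T \ S)]
  intro a ha hT
  by_contra hS'
  exact (P.pr_eq_zero_iff _).mp hdiff a ha ⟨hT, hS'⟩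

lemma pr_preimage_inter (f : α → β) (S : Set β) (T : Set α) :
    P.pr (f ⁻¹' S ∩ T) = ∑ b, if b ∈ S then P.pr (f ⁻¹' {b} ∩ T) else 0 := by
  simp only [Dist.pr]
  calc _ = ∑ a, ∑ b, if b ∈ S then (if a ∈ f ⁻¹' {b} ∩ T then P.p a else 0) else 0 := by
        refine Finset.sum_congr rfl fun a _ => ?_
        rw [Finset.sum_eq_single (f a)] <;> simp +contextual [ite_and, eq_comm]
    _ = _ := by
        rw [Finset.sum_comm]
        refine Finset.sum_congr rfl fun b _ => ?_
        split_ifs <;> simp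

lemma pr_preimage (f : α → β) (S : Set β) :
    P.pr (f ⁻¹' S) = ∑ b, if b ∈ S then P.pr (f ⁻¹' {b}) else 0 := by
  simpa using P.pr_preimage_inter f S Set.univ

lemma exp_congr {f g : α → ℝ} (h : ∀ a, P.p a ≠ 0 → f a = g a) : P.exp f = P.exp g := by
  refine Finset.sum_congr rfl fun a _ => ?_
  by_cases hp : P.p a = 0
  · simp [hp]
  · rw [h a hp]

lemma exp_eq_pr_of_zero_or_one {f : α → ℝ} (hf : ∀ a, f a = 0 ∨ f a = 1) :
    P.exp f = P.pr {a | f a = 1} := by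
  refine Finset.sum_congr rfl fun a _ => ?_
  rcases hf a with h | h <;> simp [h]

noncomputable def push (φ : α → α) : Dist α where
  p a := P.pr (φ ⁻¹' {a})
  nonneg a := P.pr_nonneg _
  sum_one := by simpa [Dist.pr, P.sum_one] using (P.pr_preimage φ Set.univ).symm

lemma pr_push (φ : α → α) (S : Set α) : (P.push φ).pr S = P.pr (φ ⁻¹' S) :=
  (P.pr_preimage φ S).symm

noncomputable def mix (Q : Dist α) (l : ℝ) (h0 : 0 ≤ l) (h1 : l ≤ 1) : Dist α where
  p a := l * P.p a + (1 - l) * Q.p a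
  nonneg a := by have := P.nonneg a; have := Q.nonneg a; positivity
  sum_one := by
    rw [Finset.sum_add_distrib, ← Finset.mul_sum, ← Finset.mul_sum, P.sum_one, Q.sum_one]
    ring

lemma pr_mix (Q : Dist α) {l : ℝ} (h0 : 0 ≤ l) (h1 : l ≤ 1) (S : Set α) :
    (P.mix Q l h0 h1).pr S = l * P.pr S + (1 - l) * Q.pr S := by
  simp only [Dist.pr, Dist.mix, Finset.mul_sum, ← Finset.sum_add_distrib]
  refine Finset.sum_congr rfl fun a _ => ?_
  split_ifs <;> ring

end

section

variable {α β γ δ : Type*} [Fintype α]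

def Indep (P : Dist α) (f : α → β) (g : α → γ) : Prop :=
  ∀ b c, P.pr (f ⁻¹' {b} ∩ g ⁻¹' {c}) = P.pr (f ⁻¹' {b}) * P.pr (g ⁻¹' {c})

variable {P : Dist α} {f : α → β} {g : α → γ}

lemma Indep.pr_preimage [Fintype β] (h : P.Indep f g) (S : Set β) (c : γ) :
    P.pr (f ⁻¹' S ∩ g ⁻¹' {c}) = P.pr (f ⁻¹' S) * P.pr (g ⁻¹' {c}) := by
  rw [pr_preimage_inter, Dist.pr_preimage, Finset.sum_mul]
  refine Finset.sum_congr rfl fun b _ => ?_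
  split_ifs
  · exact h b c
  · rw [zero_mul]

lemma Indep.comp [Fintype β] (h : P.Indep f g) (ψ : β → δ) : P.Indep (ψ ∘ f) g :=
  fun d c => h.pr_preimage (ψ ⁻¹' {d}) c

lemma Indep.push {φ : α → α} (h : P.Indep (f ∘ φ) (g ∘ φ)) : (P.push φ).Indep f g := by
  intro b c
  simp only [pr_push]
  exact h b c

lemma Indep.mix {Q : Dist α} (hP : P.Indep f g) (hQ : Q.Indep f g)
    (hg : ∀ c, P.pr (g ⁻¹' {c}) = Q.pr (g ⁻¹' {c})) {l : ℝ} (h0 : 0 ≤ l) (h1 : l ≤ 1) :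
    (P.mix Q l h0 h1).Indep f g := by
  intro b c
  simp only [pr_mix, hP b c, hQ b c, hg]
  ring

end

end Dist

variable {Y : Finset ℝ} {K : ℕ}

def latent (ω : Prim Y K) : Y × Y × (Fin K → Bool → Bool) := (ω.1, ω.2.1, ω.2.2.1)

def obs (ω : Prim Y K) : Obs Y K := (obsY ω, obsD ω, pz ω)

lemma ivValid_iff_indep {Ps : Dist (Prim Y K)} : IVvalid Ps ↔ Ps.Indep latent pz := by
  simp only [IVvalid, Dist.Indep, Prod.forall]
  refine forall₄_congr fun a b g z => ?_
  have hlatent : latent ⁻¹' {(a, b, g)} = {ω : Prim Y K | ω.1 = a ∧ ω.2.1 = b ∧ ω.2.2.1 = g} := by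
    ext ω
    simp [latent]
  have hinter : latent ⁻¹' {(a, b, g)} ∩ pz ⁻¹' {z}
      = {ω : Prim Y K | ω.1 = a ∧ ω.2.1 = b ∧ ω.2.2.1 = g ∧ ω.2.2.2 = z} := by
    ext ω
    simp [latent, pz, and_assoc]
  rw [hinter, hlatent]
  rfl

section generation

variable {Ps : Dist (Prim Y K)} {P : Dist (Obs Y K)}

lemma generates.pr_eq (h : generates Ps P) (S : Set (Obs Y K)) : P.pr S = Ps.pr (obs ⁻¹' S) := by
  rw [Ps.pr_preimage]
  refine Finset.sum_congr rfl fun o _ => ?_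
  obtain ⟨y, d, z⟩ := o
  congr 1
  rw [h y d z]
  congr 1
  ext ω
  simp [obs]

lemma generates.prZ_eq (h : generates Ps P) (z : Fin K) : prZ P z = Ps.pr (pz ⁻¹' {z}) :=
  h.pr_eq _

lemma generates.pr_treated_div_prZ (h : generates Ps P) (hv : IVvalid Ps) {z : Fin K}
    (hz : 0 < prZ P z) (Q : Y → Prop) :
    P.pr {o | Q o.1 ∧ o.2.1 = true ∧ o.2.2 = z} / prZ P z
      = Ps.pr {ω | Q ω.2.1 ∧ pd ω z false = true} := by
  have hset : obs ⁻¹' {o | Q o.1 ∧ o.2.1 = true ∧ o.2.2 = z}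
      = latent ⁻¹' {u | Q u.2.1 ∧ u.2.2 z false = true} ∩ pz ⁻¹' {z} := by
    ext ω
    simp only [obs, obsY, obsD, latent, pd, Set.mem_preimage, Set.mem_ofPred_eq,
      Set.mem_inter_iff, Set.mem_singleton_iff]
    constructor
    · rintro ⟨hQ, hD, rfl⟩
      simp_all
    · rintro ⟨⟨hQ, hD⟩, rfl⟩
      simp_all
  have hz' : Ps.pr (pz ⁻¹' {z}) ≠ 0 := h.prZ_eq z ▸ hz.ne'
  rw [h.pr_eq, hset, (ivValid_iff_indep.mp hv).pr_preimage, h.prZ_eq,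
    mul_div_cancel_right₀ _ hz']
  rfl

lemma generates.mix {Q : Dist (Prim Y K)} (hPs : generates Ps P) (hQ : generates Q P) {l : ℝ}
    (h0 : 0 ≤ l) (h1 : l ≤ 1) : generates (Ps.mix Q l h0 h1) P := by
  intro y d z
  rw [Dist.pr_mix, ← hPs y d z, ← hQ y d z]
  ring

end generation

lemma ae_pd_le_of_lenient {Ps : Dist (Prim Y K)} {P : Dist (Obs Y K)} (hv : IVvalid Ps)
    (hm : ivMono Ps) (hgen : generates Ps P) (hPz : ∀ z : Fin K, 0 < prZ P z) (zmax : Fin K)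
    (hzmax : ∀ z : Fin K,
      P.pr {o | o.2.1 = true ∧ o.2.2 = z} / prZ P z
        ≤ P.pr {o | o.2.1 = true ∧ o.2.2 = zmax} / prZ P zmax) :
    ∀ ω, Ps.p ω ≠ 0 → ∀ z, pd ω z false ≤ pd ω zmax false := by
  have hrate : ∀ z, P.pr {o | o.2.1 = true ∧ o.2.2 = z} / prZ P z
      = Ps.pr {ω | pd ω z false = true} := fun z => by
    simpa using hgen.pr_treated_div_prZ hv (hPz z) fun _ => True
  intro ω hω z
  rcases hm zmax z with h | h
  · exact (Ps.pr_eq_one_iff _).mp h ω hω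
  · refine Bool.le_iff_imp.mpr (Ps.ae_mem_of_ae_subset_of_pr_le
      (S := {ω | pd ω zmax false = true}) (T := {ω | pd ω z false = true}) ?_ ?_ ω hω)
    · exact fun ω' hω' => Bool.le_iff_imp.mp ((Ps.pr_eq_one_iff _).mp h ω' hω')
    · rw [← hrate, ← hrate]
      exact hzmax z

/- `Y(1)` is never observed for units that `zmax` does not release; when `zmax` is a.s. the most
lenient judge, no judge releases them, so overwriting `Y(1)` there keeps the observed law. -/
def fillUntreated (zmax : Fin K) (b : Y) (ω : Prim Y K) : Prim Y K :=
  (ω.1, if pd ω zmax false = true then ω.2.1 else b, ω.2.2)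

lemma obsY_fillUntreated {zmax : Fin K} {ω : Prim Y K} (h : pd ω (pz ω) false ≤ pd ω zmax false)
    (b : Y) : obsY (fillUntreated zmax b ω) = obsY ω := by
  have hD : obsD (fillUntreated zmax b ω) = obsD ω := rfl
  unfold obsY
  rw [hD]
  by_cases hobs : obsD ω = true
  · rw [if_pos hobs, if_pos hobs]
    exact if_pos (Bool.le_iff_imp.mp h hobs)
  · rw [if_neg hobs, if_neg hobs]
    rfl

section fillUntreated

variable {Ps : Dist (Prim Y K)} {zmax : Fin K}

lemma generates.push_fillUntreated {P : Dist (Obs Y K)} (hgen : generates Ps P)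
    (hlen : ∀ ω, Ps.p ω ≠ 0 → pd ω (pz ω) false ≤ pd ω zmax false) (b : Y) :
    generates (Ps.push (fillUntreated zmax b)) P := by
  intro y d z
  rw [hgen y d z, Dist.pr_push]
  refine Ps.pr_congr fun ω hω => ?_
  simp only [Set.mem_preimage, Set.mem_ofPred_eq, obsY_fillUntreated (hlen ω hω)]
  rfl

lemma Dist.Indep.push_fillUntreated (hv : Ps.Indep latent pz) (b : Y) :
    (Ps.push (fillUntreated zmax b)).Indep latent pz :=
  Dist.Indep.push <| hv.comp fun u => (u.1, if u.2.2 zmax false = true then u.2.1 else b, u.2.2)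

lemma pr_mix_push_fillUntreated {S : Set (Prim Y K)} (hS : ∀ b, fillUntreated zmax b ⁻¹' S = S)
    (b b' : Y) {l : ℝ} (h0 : 0 ≤ l) (h1 : l ≤ 1) :
    ((Ps.push (fillUntreated zmax b)).mix (Ps.push (fillUntreated zmax b')) l h0 h1).pr S
      = Ps.pr S := by
  rw [Dist.pr_mix, Dist.pr_push, Dist.pr_push, hS, hS]
  ring

end fillUntreated

lemma Y01.coe_eq_zero_or_one (y : Y01) : (y : ℝ) = 0 ∨ (y : ℝ) = 1 := by
  simpa only [Finset.mem_insert, Finset.mem_singleton] using y.2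

section binaryOutcome

variable {Ps : Dist (Prim Y01 K)} {P : Dist (Obs Y01 K)}

lemma mix_push_fillUntreated_mem_famUMon (hf : Ps ∈ famUMon K) (zmax : Fin K) (b b' : Y01)
    {l : ℝ} (h0 : 0 ≤ l) (h1 : l ≤ 1) :
    (Ps.push (fillUntreated zmax b)).mix (Ps.push (fillUntreated zmax b')) l h0 h1 ∈ famUMon K := by
  obtain ⟨hv, hm, hY0, hrel⟩ := hf
  have hind := ivValid_iff_indep.mp hv
  refine ⟨ivValid_iff_indep.mpr ((hind.push_fillUntreated b).mix (hind.push_fillUntreated b')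
    (fun _ => by rw [Dist.pr_push, Dist.pr_push]; rfl) h0 h1), fun z z' => ?_, ?_, fun z => ?_⟩
  · rw [pr_mix_push_fillUntreated (fun _ => rfl), pr_mix_push_fillUntreated (fun _ => rfl)]
    exact hm z z'
  · rw [pr_mix_push_fillUntreated (fun _ => rfl)]
    exact hY0
  · rw [pr_mix_push_fillUntreated (fun _ => rfl)]
    exact hrel z

lemma theta_eq_pr_of_release (hrel : ∀ z : Fin K, Ps.pr {ω | pd ω z true = true} = 1) :
    theta Ps = Ps.pr {ω | (ω.2.1 : ℝ) = 1} := by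
  rw [theta, Ps.exp_congr (g := fun ω => (ω.2.1 : ℝ)),
    Ps.exp_eq_pr_of_zero_or_one fun ω => Y01.coe_eq_zero_or_one ω.2.1]
  intro ω hω
  have hD : pd ω (pz ω) true = true := (Ps.pr_eq_one_iff _).mp (hrel (pz ω)) ω hω
  simp [cfY, hD]

lemma theta_mem_Icc (hf : Ps ∈ famUMon K) (hgen : generates Ps P) {z : Fin K}
    (hz : 0 < prZ P z) :
    theta Ps ∈ Set.Icc (P.pr {o | (o.1 : ℝ) = 1 ∧ o.2.1 = true ∧ o.2.2 = z} / prZ P z)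
      (1 - P.pr {o | (o.1 : ℝ) = 0 ∧ o.2.1 = true ∧ o.2.2 = z} / prZ P z) := by
  rw [theta_eq_pr_of_release hf.2.2.2, hgen.pr_treated_div_prZ hf.1 hz fun y => (y : ℝ) = 1,
    hgen.pr_treated_div_prZ hf.1 hz fun y => (y : ℝ) = 0, ← Ps.pr_compl]
  refine ⟨Ps.pr_mono fun ω h => h.1, Ps.pr_mono fun ω h h' => ?_⟩
  simp_all

lemma theta_mix_push_fillUntreated (hf : Ps ∈ famUMon K) (zmax : Fin K) {b₀ b₁ : Y01}
    (hb₀ : (b₀ : ℝ) = 0) (hb₁ : (b₁ : ℝ) = 1) {l : ℝ} (h0 : 0 ≤ l) (h1 : l ≤ 1) :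
    theta ((Ps.push (fillUntreated zmax b₀)).mix (Ps.push (fillUntreated zmax b₁)) l h0 h1)
      = l * Ps.pr {ω | (ω.2.1 : ℝ) = 1 ∧ pd ω zmax false = true}
        + (1 - l) * (1 - Ps.pr {ω | (ω.2.1 : ℝ) = 0 ∧ pd ω zmax false = true}) := by
  rw [theta_eq_pr_of_release (mix_push_fillUntreated_mem_famUMon hf zmax b₀ b₁ h0 h1).2.2.2,
    Dist.pr_mix, Dist.pr_push, Dist.pr_push, ← Ps.pr_compl]
  congr 3 <;> ext ω <;> by_cases hD : pd ω zmax false = true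
    <;> simp [fillUntreated, hD, hb₀, hb₁]
  rcases Y01.coe_eq_zero_or_one ω.2.1 with h | h <;> simp [h]

end binaryOutcome

/-- under universal release with `Y(0) = 0` and IV monotonicity,
the identified set for the average counterfactual outcome is the judge-specific
interval of the most lenient judge. -/
theorem statement11 {K : ℕ}
    (P : Dist (Obs Y01 K)) (hPz : ∀ z : Fin K, 0 < prZ P z)
    (zmax : Fin K)
    (hzmax : ∀ z : Fin K,
      P.pr {o | o.2.1 = true ∧ o.2.2 = z} / prZ P z
        ≤ P.pr {o | o.2.1 = true ∧ o.2.2 = zmax} / prZ P zmax)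
    (hne : ∃ Ps ∈ famUMon K, generates Ps P) :
    ThetaI P (famUMon K)
      = Set.Icc
          (P.pr {o | (o.1 : ℝ) = 1 ∧ o.2.1 = true ∧ o.2.2 = zmax} / prZ P zmax)
          (1 - P.pr {o | (o.1 : ℝ) = 0 ∧ o.2.1 = true ∧ o.2.2 = zmax} / prZ P zmax)
    := by
  obtain ⟨Ps, hf, hgen⟩ := hne
  have hlen := ae_pd_le_of_lenient hf.1 hf.2.1 hgen hPz zmax hzmax
  have hgen_fill := hgen.push_fillUntreated fun ω hω => hlen ω hω (pz ω)
  ext t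
  constructor
  · rintro ⟨Ps', hf', hgen', rfl⟩
    exact theta_mem_Icc hf' hgen' (hPz zmax)
  · intro ht
    have hIcc := theta_mem_Icc hf hgen (hPz zmax)
    rw [← segment_eq_Icc (hIcc.1.trans hIcc.2)] at ht
    obtain ⟨a, b, ha, hb, hab, rfl⟩ := ht
    have ha1 : a ≤ 1 := by linarith
    refine ⟨_, mix_push_fillUntreated_mem_famUMon hf zmax ⟨0, by simp⟩ ⟨1, by simp⟩ ha ha1,
      (hgen_fill _).mix (hgen_fill _) ha ha1, ?_⟩
    rw [theta_mix_push_fillUntreated hf zmax rfl rfl,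
      hgen.pr_treated_div_prZ hf.1 (hPz zmax) fun y => (y : ℝ) = 1,
      hgen.pr_treated_div_prZ hf.1 (hPz zmax) fun y => (y : ℝ) = 0, smul_eq_mul, smul_eq_mul,
      ← hab]
    ring

end IVPol
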